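/- Let f = f₀ + →f be a C¹ function on an open set Ω ⊆ ℝ³ with values in ℍ(ℂ). Then f is both left- and right-ψ^θ-hyperholomorphic in Ω if and only if ψ^θgrad[f₀] ≡ 0 in Ω and →f is a generalized Laplacian vector field in Ω. -/

import Mathlib

noncomputable section

def iC : Quaternion ℂ := ⟨0, 1, 0, 0⟩
def jC : Quaternion ℂ := ⟨0, 0, 1, 0⟩
def kC : Quaternion ℂ := ⟨0, 0, 0, 1⟩

/-- The quaternion `e^{iθ} = cos θ + (sin θ) i`, viewed in `ℍ(ℂ)`. -/
def eC (θ : ℝ) : Quaternion ℂ := ⟨(Real.cos θ : ℂ), (Real.sin θ : ℂ), 0, 0⟩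

/-- The structural set `ψ^θ = {i, i e^{iθ} j, e^{iθ} j}`. -/
def ψC (θ : ℝ) : Fin 3 → Quaternion ℂ := ![iC, iC * eC θ * jC, eC θ * jC]

/-- Partial derivative `∂ₘ` of a complex-valued function on `ℝ³`. -/
def pd (m : Fin 3) (g : (Fin 3 → ℝ) → ℂ) (x : Fin 3 → ℝ) : ℂ :=
  fderiv ℝ g x (Pi.single m 1)

/-- Componentwise partial derivative `∂ₘ` of an `ℍ(ℂ)`-valued function on `ℝ³`. -/
def qpd (m : Fin 3) (f : (Fin 3 → ℝ) → Quaternion ℂ) (x : Fin 3 → ℝ) : Quaternion ℂ :=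
  ⟨pd m (fun y => (f y).re) x, pd m (fun y => (f y).imI) x,
   pd m (fun y => (f y).imJ) x, pd m (fun y => (f y).imK) x⟩

/-- The left generalized Cauchy–Riemann operator `ψ^θD`. -/
def DL (θ : ℝ) (f : (Fin 3 → ℝ) → Quaternion ℂ) (x : Fin 3 → ℝ) : Quaternion ℂ :=
  ψC θ 0 * qpd 0 f x + ψC θ 1 * qpd 1 f x + ψC θ 2 * qpd 2 f x

/-- The right generalized Cauchy–Riemann operator `Dψ^θ`. -/
def DR (θ : ℝ) (f : (Fin 3 → ℝ) → Quaternion ℂ) (x : Fin 3 → ℝ) : Quaternion ℂ :=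
  qpd 0 f x * ψC θ 0 + qpd 1 f x * ψC θ 1 + qpd 2 f x * ψC θ 2

/-- The generalized Laplacian system (1)–(4) for the vector field `(f₁, f₂, f₃)` at `x`
(here `∂₁ = pd 0`, `∂₂ = pd 1`, `∂₃ = pd 2`). -/
def GLsys (θ : ℝ) (f₁ f₂ f₃ : (Fin 3 → ℝ) → ℂ) (x : Fin 3 → ℝ) : Prop :=
  (-pd 0 f₁ x + (pd 1 f₂ x - pd 2 f₃ x) * (Real.sin θ : ℂ)
      - (pd 1 f₃ x + pd 2 f₂ x) * (Real.cos θ : ℂ) = 0) ∧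
  ((pd 2 f₃ x - pd 1 f₂ x) * (Real.cos θ : ℂ)
      - (pd 1 f₃ x + pd 2 f₂ x) * (Real.sin θ : ℂ) = 0) ∧
  (-pd 0 f₃ x + pd 2 f₁ x * (Real.sin θ : ℂ) + pd 1 f₁ x * (Real.cos θ : ℂ) = 0) ∧
  (pd 0 f₂ x - pd 2 f₁ x * (Real.cos θ : ℂ) + pd 1 f₁ x * (Real.sin θ : ℂ) = 0)


/-- `ψ^θ grad[f₀] = (∂₁f₀)ψ₁ + (∂₂f₀)ψ₂ + (∂₃f₀)ψ₃`. -/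
def gradψ (θ : ℝ) (f₀ : (Fin 3 → ℝ) → ℂ) (x : Fin 3 → ℝ) : Quaternion ℂ :=
  pd 0 f₀ x • ψC θ 0 + pd 1 f₀ x • ψC θ 1 + pd 2 f₀ x • ψC θ 2

/-!
For a pure quaternion `ψ` and `q = q₀ + →q` one has `ψ q = -ψ·→q + q₀ ψ + ψ × →q` and
`q ψ = -ψ·→q + q₀ ψ - ψ × →q`. Summing over `ψ = ψ^θ_m`, `q = ∂ₘ f` gives
`ψ^θD[f] = ψ^θgrad[f₀] + G` and `Dψ^θ[f] = ψ^θgrad[f₀] + conj G`, where the scalar part of `G` is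
the left-hand side of the first equation of the generalized Laplacian system and its vector part
`∑ ψ^θ_m × ∂ₘ→f` collects the other three. As `ψ^θgrad[f₀]` is a pure vector, both operators vanish
at a point iff `ψ^θgrad[f₀]` and `G` do.
-/

open Quaternion

lemma ψC_zero (θ : ℝ) : ψC θ 0 = ⟨0, 1, 0, 0⟩ := rfl

lemma ψC_one (θ : ℝ) : ψC θ 1 = ⟨0, 0, -(Real.sin θ : ℂ), (Real.cos θ : ℂ)⟩ := by
  change iC * eC θ * jC = _
  ext <;> simp only [re_mul, imI_mul, imJ_mul, imK_mul] <;> simp [iC, eC, jC]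

lemma ψC_two (θ : ℝ) : ψC θ 2 = ⟨0, 0, (Real.cos θ : ℂ), (Real.sin θ : ℂ)⟩ := by
  change eC θ * jC = _
  ext <;> simp only [re_mul, imI_mul, imJ_mul, imK_mul] <;> simp [eC, jC]

lemma gradψ_re (θ : ℝ) (f₀ : (Fin 3 → ℝ) → ℂ) (x : Fin 3 → ℝ) : (gradψ θ f₀ x).re = 0 := by
  simp only [gradψ, re_add, re_smul]
  simp [ψC_zero, ψC_one, ψC_two]

def GLsysLHS (θ : ℝ) (f₁ f₂ f₃ : (Fin 3 → ℝ) → ℂ) (x : Fin 3 → ℝ) : Quaternion ℂ :=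
  ⟨-pd 0 f₁ x + (pd 1 f₂ x - pd 2 f₃ x) * (Real.sin θ : ℂ)
      - (pd 1 f₃ x + pd 2 f₂ x) * (Real.cos θ : ℂ),
   (pd 2 f₃ x - pd 1 f₂ x) * (Real.cos θ : ℂ) - (pd 1 f₃ x + pd 2 f₂ x) * (Real.sin θ : ℂ),
   -pd 0 f₃ x + pd 2 f₁ x * (Real.sin θ : ℂ) + pd 1 f₁ x * (Real.cos θ : ℂ),
   pd 0 f₂ x - pd 2 f₁ x * (Real.cos θ : ℂ) + pd 1 f₁ x * (Real.sin θ : ℂ)⟩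

lemma GLsys_iff_GLsysLHS_eq_zero (θ : ℝ) (f₁ f₂ f₃ : (Fin 3 → ℝ) → ℂ) (x : Fin 3 → ℝ) :
    GLsys θ f₁ f₂ f₃ x ↔ GLsysLHS θ f₁ f₂ f₃ x = 0 :=
  (Quaternion.ext_iff (a := GLsysLHS θ f₁ f₂ f₃ x) (b := 0)).symm

lemma DL_eq_gradψ_add_GLsysLHS (θ : ℝ) (f : (Fin 3 → ℝ) → Quaternion ℂ) (x : Fin 3 → ℝ) :
    DL θ f x = gradψ θ (fun y => (f y).re) x
      + GLsysLHS θ (fun y => (f y).imI) (fun y => (f y).imJ) (fun y => (f y).imK) x := by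
  ext <;> simp only [DL, gradψ, re_add, imI_add, imJ_add, imK_add, re_mul, imI_mul, imJ_mul,
    imK_mul, re_smul, imI_smul, imJ_smul, imK_smul] <;>
    simp [ψC_zero, ψC_one, ψC_two, qpd, GLsysLHS] <;> ring

lemma DR_eq_gradψ_add_star_GLsysLHS (θ : ℝ) (f : (Fin 3 → ℝ) → Quaternion ℂ) (x : Fin 3 → ℝ) :
    DR θ f x = gradψ θ (fun y => (f y).re) x
      + star (GLsysLHS θ (fun y => (f y).imI) (fun y => (f y).imJ) (fun y => (f y).imK) x) := by
  ext <;> simp only [DR, gradψ, re_add, imI_add, imJ_add, imK_add, re_mul, imI_mul, imJ_mul,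
    imK_mul, re_smul, imI_smul, imJ_smul, imK_smul, re_star, imI_star, imJ_star, imK_star] <;>
    simp [ψC_zero, ψC_one, ψC_two, qpd, GLsysLHS] <;> ring

lemma Quaternion.add_eq_zero_and_add_star_eq_zero_iff {R : Type*} [CommRing R] [NoZeroDivisors R]
    [CharZero R] {p g : Quaternion R} (hp : p.re = 0) :
    p + g = 0 ∧ p + star g = 0 ↔ p = 0 ∧ g = 0 := by
  simp only [Quaternion.ext_iff, re_add, imI_add, imJ_add, imK_add, re_star, imI_star, imJ_star,
    imK_star, re_zero, imI_zero, imJ_zero, imK_zero, hp, zero_add, true_and]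
  constructor
  · rintro ⟨⟨hre, hi, hj, hk⟩, -, hi', hj', hk'⟩
    have hgi : g.imI = 0 := add_self_eq_zero.mp (by linear_combination hi - hi')
    have hgj : g.imJ = 0 := add_self_eq_zero.mp (by linear_combination hj - hj')
    have hgk : g.imK = 0 := add_self_eq_zero.mp (by linear_combination hk - hk')
    exact ⟨⟨by linear_combination hi - hgi, by linear_combination hj - hgj,
      by linear_combination hk - hgk⟩, hre, hgi, hgj, hgk⟩
  · rintro ⟨⟨hi, hj, hk⟩, hre, hgi, hgj, hgk⟩
    simp [hi, hj, hk, hre, hgi, hgj, hgk]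

lemma DL_eq_zero_and_DR_eq_zero_iff (θ : ℝ) (f : (Fin 3 → ℝ) → Quaternion ℂ) (x : Fin 3 → ℝ) :
    DL θ f x = 0 ∧ DR θ f x = 0 ↔ gradψ θ (fun y => (f y).re) x = 0 ∧
      GLsys θ (fun y => (f y).imI) (fun y => (f y).imJ) (fun y => (f y).imK) x := by
  rw [DL_eq_gradψ_add_GLsysLHS, DR_eq_gradψ_add_star_GLsysLHS, GLsys_iff_GLsysLHS_eq_zero]
  exact Quaternion.add_eq_zero_and_add_star_eq_zero_iff (gradψ_re θ _ x)

theorem stmt_14_general (θ : ℝ) (Ω : Set (Fin 3 → ℝ))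
    (f : (Fin 3 → ℝ) → Quaternion ℂ) :
    (∀ x ∈ Ω, DL θ f x = 0 ∧ DR θ f x = 0) ↔
    ((∀ x ∈ Ω, gradψ θ (fun y => (f y).re) x = 0) ∧
      (∀ x ∈ Ω, GLsys θ (fun y => (f y).imI) (fun y => (f y).imJ) (fun y => (f y).imK) x)) := by
  simp only [DL_eq_zero_and_DR_eq_zero_iff]
  exact forall₂_and

/-- A `C¹` function `f = f₀ + →f : Ω → ℍ(ℂ)` is both left- and right-`ψ^θ`-hyperholomorphic
in `Ω` iff `ψ^θgrad[f₀] ≡ 0` in `Ω` and `→f` is a generalized Laplacian vector field in `Ω`. -/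
theorem stmt_14 (θ : ℝ) (Ω : Set (Fin 3 → ℝ)) (hΩ : IsOpen Ω)
    (f : (Fin 3 → ℝ) → Quaternion ℂ)
    (hre : ContDiffOn ℝ 1 (fun y => (f y).re) Ω)
    (himI : ContDiffOn ℝ 1 (fun y => (f y).imI) Ω)
    (himJ : ContDiffOn ℝ 1 (fun y => (f y).imJ) Ω)
    (himK : ContDiffOn ℝ 1 (fun y => (f y).imK) Ω) :
    (∀ x ∈ Ω, DL θ f x = 0 ∧ DR θ f x = 0) ↔
    ((∀ x ∈ Ω, gradψ θ (fun y => (f y).re) x = 0) ∧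
      (∀ x ∈ Ω, GLsys θ (fun y => (f y).imI) (fun y => (f y).imJ) (fun y => (f y).imK) x)) :=
  stmt_14_general θ Ω f
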